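/- arXiv:1502.07823 — 2 statements merged into one kernel-verified Lean document; each statement's English description precedes it below -/
import Mathlib

section
/- Every matching achievable as the men-optimal stable matching of a profile where a coalition L of women report arbitrary (possibly incomplete, reordered) preference lists, and which is stable with respect to the true profile, is also achievable as the men-optimal stable matching of some profile where each woman in L reports a truncation (prefix) of her true list. -/
open List

/-- A stable-matching instance: each agent has a strict preference order
(a duplicate-free list, earlier = more preferred) over a subset of the other side. -/
structure SMInstance (M W : Type*) where
  mpref : M → List W
  wpref : W → List M
  mnodup : ∀ m, (mpref m).Nodup
  wnodup : ∀ w, (wpref w).Nodup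

/-- A matching: a pairing of men and women (agents may be unmatched),
involutive on matched pairs. -/
structure Matching (M W : Type*) where
  μm : M → Option W
  μw : W → Option M
  consistent : ∀ m w, μm m = some w ↔ μw w = some m

section Defs

variable {M W : Type*} [DecidableEq M] [DecidableEq W]

/-- Man `m` strictly prefers woman `w` to the (possibly empty) assignment `o`. -/
def SMInstance.mPref (I : SMInstance M W) (m : M) (w : W) : Option W → Prop
  | some w' => w ∈ I.mpref m ∧ (w' ∉ I.mpref m ∨ (I.mpref m).idxOf w < (I.mpref m).idxOf w')
  | none => w ∈ I.mpref m

/-- Woman `w` strictly prefers man `m` to the (possibly empty) assignment `o`. -/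
def SMInstance.wPref (I : SMInstance M W) (w : W) (m : M) : Option M → Prop
  | some m' => m ∈ I.wpref w ∧ (m' ∉ I.wpref w ∨ (I.wpref w).idxOf m < (I.wpref w).idxOf m')
  | none => m ∈ I.wpref w

/-- Man `m` weakly prefers assignment `o₁` to assignment `o₂`. -/
def SMInstance.mWeak (I : SMInstance M W) (m : M) (o₁ o₂ : Option W) : Prop :=
  o₁ = o₂ ∨ ∃ w, o₁ = some w ∧ I.mPref m w o₂

/-- Woman `w` weakly prefers assignment `o₁` to assignment `o₂`. -/
def SMInstance.wWeak (I : SMInstance M W) (w : W) (o₁ o₂ : Option M) : Prop :=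
  o₁ = o₂ ∨ ∃ m, o₁ = some m ∧ I.wPref w m o₂

def IndivRational (I : SMInstance M W) (μ : Matching M W) : Prop :=
  ∀ m w, μ.μm m = some w → w ∈ I.mpref m ∧ m ∈ I.wpref w

def BlockingPair (I : SMInstance M W) (μ : Matching M W) (m : M) (w : W) : Prop :=
  μ.μm m ≠ some w ∧ I.mPref m w (μ.μm m) ∧ I.wPref w m (μ.μw w)

def IsStable (I : SMInstance M W) (μ : Matching M W) : Prop :=
  IndivRational I μ ∧ ∀ m w, ¬ BlockingPair I μ m w

/-- The men-optimal stable matching (= output of men-proposing Gale–Shapley). -/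
def IsMenOptimal (I : SMInstance M W) (μ : Matching M W) : Prop :=
  IsStable I μ ∧ ∀ μ', IsStable I μ' → ∀ m, I.mWeak m (μ.μm m) (μ'.μm m)

/-- The women-optimal stable matching. -/
def IsWomenOptimal (I : SMInstance M W) (μ : Matching M W) : Prop :=
  IsStable I μ ∧ ∀ μ', IsStable I μ' → ∀ w, I.wWeak w (μ.μw w) (μ'.μw w)

/-- `I'` arises from `I` by arbitrary misreports of the women in `L`
(all men and all women outside `L` are truthful). -/
def GeneralManip (I I' : SMInstance M W) (L : Set W) : Prop :=
  I'.mpref = I.mpref ∧ ∀ w ∉ L, I'.wpref w = I.wpref w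

/-- `I'` arises from `I` by truncation (prefix) misreports of the women in `L`. -/
def TruncManip (I I' : SMInstance M W) (L : Set W) : Prop :=
  GeneralManip I I' L ∧ ∀ w ∈ L, (I'.wpref w) <+: (I.wpref w)

/-- `I'` arises from `I` by permutation misreports of the women in `L`. -/
def PermManip (I I' : SMInstance M W) (L : Set W) : Prop :=
  GeneralManip I I' L ∧ ∀ w ∈ L, (I'.wpref w).Perm (I.wpref w)

/-- Woman `w` is strictly better off in `μ₁` than in `μ₂` (true preferences). -/
def wStrictBetter (I : SMInstance M W) (w : W) (μ₁ μ₂ : Matching M W) : Prop :=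
  ∃ m, μ₁.μw w = some m ∧ I.wPref w m (μ₂.μw w)

/-- The set `δ(w)` of suitors of `w` at matching `μ`: the men who prefer `w`
to their own partner in `μ`. -/
def suitorSet (I : SMInstance M W) (μ : Matching M W) (w : W) : Set M :=
  {m | I.mPref m w (μ.μm m)}

/-- The suitor graph of Kobayashi–Matsui, on vertices `M ⊕ W ⊕ {s}`. -/
inductive SuitorEdge (I : SMInstance M W) (L : Set W) (μ : Matching M W) :
    M ⊕ W ⊕ Unit → M ⊕ W ⊕ Unit → Prop
  | partner_wm (w : W) (m : M) : μ.μw w = some m →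
      SuitorEdge I L μ (Sum.inr (Sum.inl w)) (Sum.inl m)
  | partner_mw (w : W) (m : M) : μ.μw w = some m →
      SuitorEdge I L μ (Sum.inl m) (Sum.inr (Sum.inl w))
  | suitor_manip (w : W) (m : M) : w ∈ L → m ∈ suitorSet I μ w →
      SuitorEdge I L μ (Sum.inl m) (Sum.inr (Sum.inl w))
  | suitor_honest (w : W) (m : M) : w ∉ L → m ∈ suitorSet I μ w →
      (∀ m' ∈ suitorSet I μ w, m' ≠ m → (I.wpref w).idxOf m < (I.wpref w).idxOf m') →
      SuitorEdge I L μ (Sum.inl m) (Sum.inr (Sum.inl w))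
  | fromSource (w : W) : suitorSet I μ w = ∅ →
      SuitorEdge I L μ (Sum.inr (Sum.inr ())) (Sum.inr (Sum.inl w))

/-- Reachability in the suitor graph. -/
abbrev SReach (I : SMInstance M W) (L : Set W) (μ : Matching M W) :
    (M ⊕ W ⊕ Unit) → (M ⊕ W ⊕ Unit) → Prop :=
  Relation.ReflTransGen (SuitorEdge I L μ)

/-- A reduced table (shortlists) for instance `I`: sublists of the true lists,
with mutual membership, where each man is engaged to the head of his reduced list,
each woman to the last man of hers, and every removed man is worse for the woman
than her current partner. -/
structure ReducedTable (I : SMInstance M W) where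
  rm : M → List W
  rw : W → List M
  rmSub : ∀ m, (rm m).Sublist (I.mpref m)
  rwSub : ∀ w, (rw w).Sublist (I.wpref w)
  mem_iff : ∀ m w, w ∈ rm m ↔ m ∈ rw w
  engaged : ∀ m w, (rm m).head? = some w ↔ (rw w).getLast? = some m
  removed_worse : ∀ m w p, m ∈ I.wpref w → m ∉ rw w → (rw w).getLast? = some p →
      (I.wpref w).idxOf p < (I.wpref w).idxOf m

/-- A rotation: a cyclic sequence of (distinct) men `m₀,…,m_{r-1}`
together with their current partners `w₀,…,w_{r-1}`. -/
structure Rot (M W : Type*) where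
  r : ℕ
  hr : 2 ≤ r
  ms : Fin r → M
  ws : Fin r → W
  inj : Function.Injective ms

/-- Cyclic successor of an index of a rotation. -/
def Rot.nxt (R : Rot M W) (i : Fin R.r) : Fin R.r :=
  ⟨((i : ℕ) + 1) % R.r, Nat.mod_lt _ (by have := R.hr; omega)⟩

/-- The reduced list of woman `w` determined by the stable matching `μ`:
the men weakly preferred to her current partner. -/
def reducedListW (I : SMInstance M W) (μ : Matching M W) (w : W) : List M :=
  match μ.μw w with
  | some p => (I.wpref w).filter (fun m => decide ((I.wpref w).idxOf m ≤ (I.wpref w).idxOf p))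
  | none => []

/-- The reduced list of man `m` determined by the stable matching `μ`. -/
def reducedListM (I : SMInstance M W) (μ : Matching M W) (m : M) : List W :=
  (I.mpref m).filter (fun w => decide (m ∈ reducedListW I μ w))

/-- The rotation `R` is exposed in (the reduced table of) the matching `μ`:
`w_i` is first and `w_{i+1}` second on `m_i`'s reduced list. -/
def Exposed (I : SMInstance M W) (μ : Matching M W) (R : Rot M W) : Prop :=
  ∀ i, (reducedListM I μ (R.ms i)).head? = some (R.ws i) ∧
       (reducedListM I μ (R.ms i))[1]? = some (R.ws (R.nxt i))

/-- `μ'` is the matching obtained from `μ` by eliminating the rotation `R`: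
each `m_i` is now matched with `w_{i+1}`, everyone else is unchanged. -/
def ElimStep (R : Rot M W) (μ μ' : Matching M W) : Prop :=
  (∀ i, μ'.μm (R.ms i) = some (R.ws (R.nxt i))) ∧
  ∀ m, (∀ i, m ≠ R.ms i) → μ'.μm m = μ.μm m

/-- `ElimSeq I μ S μ'`: the matching `μ'` is obtained from `μ` by successively
eliminating the (exposed-at-the-time) rotations of the set `S`. -/
inductive ElimSeq (I : SMInstance M W) : Matching M W → Set (Rot M W) → Matching M W → Prop
  | refl (μ : Matching M W) : ElimSeq I μ ∅ μ
  | step {μ μ' μ'' : Matching M W} {R : Rot M W} {S : Set (Rot M W)} :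
      Exposed I μ R → ElimStep R μ μ' → ElimSeq I μ' S μ'' → ElimSeq I μ (insert R S) μ''

/-- The rotation `R` moves man `m` from woman `w` to woman `w'`. -/
def Moves (R : Rot M W) (m : M) (w w' : W) : Prop :=
  ∃ i, R.ms i = m ∧ R.ws i = w ∧ R.ws (R.nxt i) = w'

/-- `R₁` explicitly precedes `R₂`: they share a man `m` such that `R₁` moves `m`
to some woman `w` and `R₂` moves `m` away from `w`. -/
def ExplicitPrec (R₁ R₂ : Rot M W) : Prop :=
  ∃ m w w₁ w₂, Moves R₁ m w₁ w ∧ Moves R₂ m w w₂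

/-- The precedence relation `≺`: transitive closure of explicit precedence. -/
def Prec (R₁ R₂ : Rot M W) : Prop :=
  Relation.TransGen ExplicitPrec R₁ R₂

/-- `R` is a rotation of the instance `I`: it is exposed at some matching
obtained from the men-optimal matching by eliminating rotations. -/
def IsRotOf (I : SMInstance M W) (R : Rot M W) : Prop :=
  ∃ μ0 S μ', IsMenOptimal I μ0 ∧ ElimSeq I μ0 S μ' ∧ Exposed I μ' R

/-- A closed (downward-closed under `≺`) set of rotations of the instance `I`. -/
def IsClosedSet (I : SMInstance M W) (𝓡 : Set (Rot M W)) : Prop :=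
  (∀ R ∈ 𝓡, IsRotOf I R) ∧ ∀ R ∈ 𝓡, ∀ R', IsRotOf I R' → Prec R' R → R' ∈ 𝓡

/-- The closed set `𝓡` can be eliminated: the matching obtained by eliminating it
is stable w.r.t. the true profile and is the men-optimal stable matching of some
profile in which only the women of `L` misreport. -/
def CanEliminate (I : SMInstance M W) (L : Set W) (𝓡 : Set (Rot M W)) : Prop :=
  ∃ μ0 μ', IsMenOptimal I μ0 ∧ ElimSeq I μ0 𝓡 μ' ∧ IsStable I μ' ∧
    ∃ I', GeneralManip I I' L ∧ IsMenOptimal I' μ'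

/-- `R` is a maximal rotation of the set `𝓡`. -/
def MaxRot (𝓡 : Set (Rot M W)) (R : Rot M W) : Prop :=
  R ∈ 𝓡 ∧ ∀ R' ∈ 𝓡, ¬ Prec R R'

/-- Whether man `m` proposes to woman `w` in the men-proposing Gale–Shapley run
whose outcome is `μ` (he proposes to every woman he weakly prefers to his final partner). -/
def proposedToB (I : SMInstance M W) (μ : Matching M W) (m : M) (w : W) : Bool :=
  decide (w ∈ I.mpref m) &&
    (match μ.μm m with
     | none => true
     | some w' => decide ((I.mpref m).idxOf w ≤ (I.mpref m).idxOf w'))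

/-- The proposal list `Pro(w)`: all men who proposed to `w`, ordered as in her stated list. -/
def proposals (I : SMInstance M W) (μ : Matching M W) (w : W) : List M :=
  (I.wpref w).filter (fun m => proposedToB I μ m w)

/-- `μ` is feasible for the permutation-manipulation game of coalition `L`. -/
def FeasibleM (I : SMInstance M W) (L : Set W) (μ : Matching M W) : Prop :=
  IsStable I μ ∧ ∃ I', PermManip I I' L ∧ IsMenOptimal I' μ

/-- `μ` is Pareto-optimal among feasible matchings (for the women). -/
def ParetoOptimal (I : SMInstance M W) (L : Set W) (μ : Matching M W) : Prop :=
  FeasibleM I L μ ∧ ¬∃ μ', FeasibleM I L μ' ∧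
    (∀ w, I.wWeak w (μ'.μw w) (μ.μw w)) ∧ (∃ w, wStrictBetter I w μ' μ)

/-- The reported profile `I'` with induced matching `μ` is a super-strong Nash
equilibrium of the permutation-manipulation game under the feasibility assumption. -/
def SuperStrongNE (I : SMInstance M W) (L : Set W) (I' : SMInstance M W)
    (μ : Matching M W) : Prop :=
  PermManip I I' L ∧ IsMenOptimal I' μ ∧ IsStable I μ ∧
  ∀ (Ls : Set W), Ls ⊆ L → ∀ I'' μ'',
    PermManip I I'' L → (∀ w ∉ Ls, I''.wpref w = I'.wpref w) →
    IsMenOptimal I'' μ'' → IsStable I μ'' →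
    ¬((∀ l ∈ Ls, I.wWeak l (μ''.μw l) (μ.μw l)) ∧ ∃ l ∈ Ls, wStrictBetter I l μ'' μ)

end Defs

/-!
Let `T` be the profile in which each woman of `L` truncates her true list right after her
`μ`-partner. Since `μ` is stable for the true profile and no woman of `L` has cut anyone
she likes better than her partner, `μ` is stable for `T`. If `ν` is any stable matching of `T`,
the men-wise join `λ = μ ∨ ν` is stable for `T`, and each woman receives the worse of her
two partners in it; a woman of `L` finds nobody on her truncated list worse than her
`μ`-partner, so `λ` agrees with `μ` on `L`. This makes `λ` stable for the manipulated
profile `I'` as well, and men-optimality of `μ` there gives `μ ≥ λ ≥ ν` for every man.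
-/

section Preferences

variable {M W : Type*} (J : SMInstance M W)

lemma SMInstance.mPref_irrefl [DecidableEq W] (m : M) (w : W) : ¬ J.mPref m w (some w) := by
  rintro ⟨hw, hw' | hlt⟩
  exacts [hw' hw, lt_irrefl _ hlt]

lemma SMInstance.wPref_irrefl [DecidableEq M] (w : W) (m : M) : ¬ J.wPref w m (some m) := by
  rintro ⟨hm, hm' | hlt⟩
  exacts [hm' hm, lt_irrefl _ hlt]

lemma SMInstance.mPref_total [DecidableEq W] {m : M} {w₁ w₂ : W}
    (h₁ : w₁ ∈ J.mpref m) (h₂ : w₂ ∈ J.mpref m) (hne : w₁ ≠ w₂) :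
    J.mPref m w₁ (some w₂) ∨ J.mPref m w₂ (some w₁) := by
  have hidx : (J.mpref m).idxOf w₁ ≠ (J.mpref m).idxOf w₂ := fun h => hne ((idxOf_inj h₁).1 h)
  rcases hidx.lt_or_gt with h | h
  exacts [Or.inl ⟨h₁, Or.inr h⟩, Or.inr ⟨h₂, Or.inr h⟩]

lemma SMInstance.wPref_total [DecidableEq M] {w : W} {m₁ m₂ : M}
    (h₁ : m₁ ∈ J.wpref w) (h₂ : m₂ ∈ J.wpref w) (hne : m₁ ≠ m₂) :
    J.wPref w m₁ (some m₂) ∨ J.wPref w m₂ (some m₁) := by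
  have hidx : (J.wpref w).idxOf m₁ ≠ (J.wpref w).idxOf m₂ := fun h => hne ((idxOf_inj h₁).1 h)
  rcases hidx.lt_or_gt with h | h
  exacts [Or.inl ⟨h₁, Or.inr h⟩, Or.inr ⟨h₂, Or.inr h⟩]

variable {J}

lemma SMInstance.mPref_trans [DecidableEq W] {m : M} {w w' : W} {o : Option W}
    (h₁ : J.mPref m w (some w')) (h₂ : J.mPref m w' o) : J.mPref m w o := by
  obtain ⟨hw, hw' | hlt⟩ := h₁
  · cases o
    exacts [absurd h₂ hw', absurd h₂.1 hw']
  cases o with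
  | none => exact hw
  | some w'' => exact ⟨hw, h₂.2.imp_right hlt.trans⟩

lemma SMInstance.mPref_of_mWeak [DecidableEq W] {m : M} {w : W} {o₁ o₂ : Option W}
    (h₁ : J.mPref m w o₁) (h₂ : J.mWeak m o₁ o₂) : J.mPref m w o₂ := by
  rcases h₂ with rfl | ⟨w', rfl, h⟩
  exacts [h₁, J.mPref_trans h₁ h]

lemma SMInstance.mWeak_trans [DecidableEq W] {m : M} {o₁ o₂ o₃ : Option W}
    (h₁ : J.mWeak m o₁ o₂) (h₂ : J.mWeak m o₂ o₃) : J.mWeak m o₁ o₃ := by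
  rcases h₁ with rfl | ⟨w, rfl, h⟩
  exacts [h₂, Or.inr ⟨w, rfl, J.mPref_of_mWeak h h₂⟩]

lemma SMInstance.mPref_congr [DecidableEq W] {J' : SMInstance M W} (h : J.mpref = J'.mpref)
    {m : M} {w : W} {o : Option W} : J.mPref m w o ↔ J'.mPref m w o := by
  cases o <;> simp [SMInstance.mPref, h]

lemma SMInstance.wPref_congr [DecidableEq M] {J' : SMInstance M W} {w : W}
    (h : J.wpref w = J'.wpref w) {m : M} {o : Option M} : J.wPref w m o ↔ J'.wPref w m o := by
  cases o <;> simp [SMInstance.wPref, h]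

lemma SMInstance.mWeak_congr [DecidableEq W] {J' : SMInstance M W} (h : J.mpref = J'.mpref)
    {m : M} {o₁ o₂ : Option W} : J.mWeak m o₁ o₂ ↔ J'.mWeak m o₁ o₂ := by
  simp only [SMInstance.mWeak, SMInstance.mPref_congr h]

lemma SMInstance.wPref_of_prefix [DecidableEq M] {J' : SMInstance M W} {w : W}
    (h : J.wpref w <+: J'.wpref w) {m : M} {o : Option M}
    (ho : ∀ p, o = some p → p ∈ J.wpref w) (hm : J.wPref w m o) : J'.wPref w m o := by
  cases o with
  | none => exact h.subset hm
  | some p =>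
    obtain ⟨hm, hp | hlt⟩ := hm
    · exact absurd (ho p rfl) hp
    refine ⟨h.subset hm, Or.inr ?_⟩
    rwa [← h.idxOf_eq_of_mem hm, ← h.idxOf_eq_of_mem (ho p rfl)]

end Preferences

section Stability

variable {M W : Type*}

lemma Matching.eq_of_μm_eq_some (μ : Matching M W) {m₁ m₂ : M} {w : W}
    (h₁ : μ.μm m₁ = some w) (h₂ : μ.μm m₂ = some w) : m₁ = m₂ :=
  Option.some.inj (((μ.consistent _ _).1 h₁).symm.trans ((μ.consistent _ _).1 h₂))

lemma Matching.eq_of_μw_eq_some (μ : Matching M W) {w₁ w₂ : W} {m : M}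
    (h₁ : μ.μw w₁ = some m) (h₂ : μ.μw w₂ = some m) : w₁ = w₂ :=
  Option.some.inj (((μ.consistent _ _).2 h₁).symm.trans ((μ.consistent _ _).2 h₂))

variable [DecidableEq M] [DecidableEq W] {J : SMInstance M W}

lemma IsStable.exists_wPref_of_mPref {μ : Matching M W} (hs : IsStable J μ) {m : M} {w : W}
    (hm : J.mPref m w (μ.μm m)) (hmem : m ∈ J.wpref w) :
    ∃ p, μ.μw w = some p ∧ J.wPref w p (some m) := by
  have hne : μ.μm m ≠ some w := fun h => J.mPref_irrefl m w (h ▸ hm)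
  cases hp : μ.μw w with
  | none => exact absurd ⟨hne, hm, hp ▸ hmem⟩ (hs.2 m w)
  | some p =>
    have hpm : p ≠ m := by rintro rfl; exact hne ((μ.consistent _ _).2 hp)
    rcases J.wPref_total (hs.1 p w ((μ.consistent _ _).2 hp)).2 hmem hpm with h | h
    · exact ⟨p, rfl, h⟩
    · exact absurd ⟨hne, hm, hp ▸ h⟩ (hs.2 m w)

lemma IsStable.exists_mPref_of_wPref {μ : Matching M W} (hs : IsStable J μ) {m : M} {w : W}
    (hw : J.wPref w m (μ.μw w)) (hmem : w ∈ J.mpref m) :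
    ∃ q, μ.μm m = some q ∧ J.mPref m q (some w) := by
  have hne : μ.μm m ≠ some w := fun h => J.wPref_irrefl w m ((μ.consistent _ _).1 h ▸ hw)
  cases hq : μ.μm m with
  | none => exact absurd ⟨hne, hq ▸ hmem, hw⟩ (hs.2 m w)
  | some q =>
    have hqw : q ≠ w := by rintro rfl; exact hne hq
    rcases J.mPref_total (hs.1 m q hq).1 hmem hqw with h | h
    · exact ⟨q, rfl, h⟩
    · exact absurd ⟨hne, hq ▸ h, hw⟩ (hs.2 m w)

lemma IsStable.not_blockingPair {σ lm : Matching M W} (hσ : IsStable J σ) {m : M} {w : W}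
    (hm : J.mWeak m (lm.μm m) (σ.μm m)) (hw : lm.μw w = σ.μw w) : ¬ BlockingPair J lm m w := by
  rintro ⟨hne, hmp, hwp⟩
  refine hσ.2 m w ⟨fun h => hne ((lm.consistent _ _).2 ?_), J.mPref_of_mWeak hmp hm, hw ▸ hwp⟩
  rw [hw]
  exact (σ.consistent _ _).1 h

lemma IsStable.of_wpref_prefix {J' : SMInstance M W} {μ : Matching M W}
    (hm : J'.mpref = J.mpref) (hpre : ∀ w, J'.wpref w <+: J.wpref w)
    (hIR : IndivRational J' μ) (hμ : IsStable J μ) : IsStable J' μ := by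
  refine ⟨hIR, fun m w ⟨hne, hmp, hwp⟩ => hμ.2 m w ⟨hne, (SMInstance.mPref_congr hm).1 hmp, ?_⟩⟩
  refine SMInstance.wPref_of_prefix (hpre w) (fun p hp => ?_) hwp
  exact (hIR p w ((μ.consistent _ _).2 hp)).2

lemma IsStable.of_agree {J' : SMInstance M W} {μ lm : Matching M W}
    (hm : J'.mpref = J.mpref) (hlm : IsStable J lm) (hμ : IsStable J' μ)
    (habove : ∀ m, J.mWeak m (lm.μm m) (μ.μm m))
    (hagree : ∀ w, J'.wpref w = J.wpref w ∨ lm.μw w = μ.μw w) : IsStable J' lm := by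
  constructor
  · intro m w h
    refine ⟨hm ▸ (hlm.1 m w h).1, ?_⟩
    rcases hagree w with hw | hw
    · exact hw ▸ (hlm.1 m w h).2
    · exact (hμ.1 m w ((μ.consistent _ _).2 (hw ▸ (lm.consistent _ _).1 h))).2
  · intro m w
    rcases hagree w with hw | hw
    · rintro ⟨hne, hmp, hwp⟩
      exact hlm.2 m w
        ⟨hne, (SMInstance.mPref_congr hm).1 hmp, (SMInstance.wPref_congr hw).1 hwp⟩
    · exact hμ.not_blockingPair ((SMInstance.mWeak_congr hm).2 (habove m)) hw

end Stability

section Join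

variable {M W : Type*} [DecidableEq M] [DecidableEq W] (J : SMInstance M W) (μ ν : Matching M W)

def MGains (m : M) : Prop :=
  ∃ w, ν.μm m = some w ∧ J.mPref m w (μ.μm m)

def WLoses (w : W) : Prop :=
  ∃ m, μ.μw w = some m ∧ J.wPref w m (ν.μw w)

variable {J μ ν}

lemma wLoses_of_mGains (hμ : IsStable J μ) (hν : IsStable J ν) {m : M} {w : W}
    (hmw : ν.μm m = some w) (hm : MGains J μ ν m) : WLoses J μ ν w := by
  obtain ⟨w', hw', hpref⟩ := hm
  cases hmw.symm.trans hw'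
  obtain ⟨p, hp, hwp⟩ := hμ.exists_wPref_of_mPref hpref (hν.1 m w hmw).2
  exact ⟨p, hp, (ν.consistent m w).1 hmw ▸ hwp⟩

lemma mGains_of_wLoses (hμ : IsStable J μ) (hν : IsStable J ν) {m : M} {w : W}
    (hmw : μ.μm m = some w) (hw : WLoses J μ ν w) : MGains J μ ν m := by
  obtain ⟨m', hm', hpref⟩ := hw
  cases μ.eq_of_μm_eq_some hmw ((μ.consistent _ _).2 hm')
  obtain ⟨q, hq, hmq⟩ := hν.exists_mPref_of_wPref hpref (hμ.1 m w hmw).1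
  exact ⟨q, hq, hmw ▸ hmq⟩

/-- `wLoses_of_mGains` and `mGains_of_wLoses` give injections `ν : MGains → WLoses` and
`μ⁻¹ : WLoses → MGains` between finite sets, so both are bijections. -/
lemma mGains_wLoses_surjective [Finite M] [Finite W] (hμ : IsStable J μ) (hν : IsStable J ν) :
    (∀ w, WLoses J μ ν w → ∃ m, ν.μm m = some w ∧ MGains J μ ν m) ∧
      (∀ m, MGains J μ ν m → ∃ w, μ.μm m = some w ∧ WLoses J μ ν w) := by
  have hf : ∀ a : {m // MGains J μ ν m}, ∃ b : {w // WLoses J μ ν w}, ν.μm a = some b := by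
    rintro ⟨m, hm⟩
    obtain ⟨w, hw, -⟩ := id hm
    exact ⟨⟨w, wLoses_of_mGains hμ hν hw hm⟩, hw⟩
  have hg : ∀ b : {w // WLoses J μ ν w}, ∃ a : {m // MGains J μ ν m}, μ.μm a = some b := by
    rintro ⟨w, hw⟩
    obtain ⟨m, hm, -⟩ := id hw
    have hmw := (μ.consistent _ _).2 hm
    exact ⟨⟨m, mGains_of_wLoses hμ hν hmw hw⟩, hmw⟩
  choose f hf using hf
  choose g hg using hg
  have hf_inj : Function.Injective f := fun a a' h =>
    Subtype.ext (ν.eq_of_μm_eq_some (hf a) (h ▸ hf a'))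
  have hg_inj : Function.Injective g := fun b b' h =>
    Subtype.ext <|
      μ.eq_of_μw_eq_some ((μ.consistent _ _).1 (hg b)) (h ▸ (μ.consistent _ _).1 (hg b'))
  have hcard := le_antisymm (Nat.card_le_card_of_injective f hf_inj)
    (Nat.card_le_card_of_injective g hg_inj)
  have hf_surj := ((Nat.bijective_iff_injective_and_card f).2 ⟨hf_inj, hcard⟩).2
  have hg_surj := ((Nat.bijective_iff_injective_and_card g).2 ⟨hg_inj, hcard.symm⟩).2
  refine ⟨fun w hw => ?_, fun m hm => ?_⟩
  · obtain ⟨a, ha⟩ := hf_surj ⟨w, hw⟩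
    exact ⟨a, by simpa [ha] using hf a, a.2⟩
  · obtain ⟨b, hb⟩ := hg_surj ⟨m, hm⟩
    exact ⟨b, by simpa [hb] using hg b, b.2⟩

lemma mGains_iff_wLoses_of_ν [Finite M] [Finite W] (hμ : IsStable J μ) (hν : IsStable J ν)
    {m : M} {w : W} (hmw : ν.μm m = some w) : MGains J μ ν m ↔ WLoses J μ ν w := by
  refine ⟨wLoses_of_mGains hμ hν hmw, fun hw => ?_⟩
  obtain ⟨m', hm', hgain⟩ := (mGains_wLoses_surjective hμ hν).1 w hw
  exact ν.eq_of_μm_eq_some hm' hmw ▸ hgain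

lemma mGains_iff_wLoses_of_μ [Finite M] [Finite W] (hμ : IsStable J μ) (hν : IsStable J ν)
    {m : M} {w : W} (hmw : μ.μm m = some w) : MGains J μ ν m ↔ WLoses J μ ν w := by
  refine ⟨fun hm => ?_, mGains_of_wLoses hμ hν hmw⟩
  obtain ⟨w', hw', hlose⟩ := (mGains_wLoses_surjective hμ hν).2 m hm
  exact Option.some.inj (hw'.symm.trans hmw) ▸ hlose

open Classical in
noncomputable def menJoin [Finite M] [Finite W] (hμ : IsStable J μ) (hν : IsStable J ν) :
    Matching M W where
  μm m := if MGains J μ ν m then ν.μm m else μ.μm m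
  μw w := if WLoses J μ ν w then ν.μw w else μ.μw w
  consistent m w := by
    by_cases hm : MGains J μ ν m <;> by_cases hw : WLoses J μ ν w <;> simp only [hm, hw, if_true,
      if_false, ← ν.consistent, ← μ.consistent]
    · exact iff_of_false (fun h => hw ((mGains_iff_wLoses_of_ν hμ hν h).1 hm))
        (fun h => hw ((mGains_iff_wLoses_of_μ hμ hν h).1 hm))
    · exact iff_of_false (fun h => hm ((mGains_iff_wLoses_of_μ hμ hν h).2 hw))
        (fun h => hm ((mGains_iff_wLoses_of_ν hμ hν h).2 hw))

variable [Finite M] [Finite W] (hμ : IsStable J μ) (hν : IsStable J ν)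

lemma mWeak_menJoin_left (m : M) : J.mWeak m ((menJoin hμ hν).μm m) (μ.μm m) := by
  by_cases hm : MGains J μ ν m
  · obtain ⟨w, hw, hpref⟩ := id hm
    simp only [menJoin, hm, if_true]
    exact Or.inr ⟨w, hw, hpref⟩
  · simp only [menJoin, hm, if_false]
    exact Or.inl rfl

lemma mWeak_menJoin_right (m : M) : J.mWeak m ((menJoin hμ hν).μm m) (ν.μm m) := by
  by_cases hm : MGains J μ ν m
  · simp only [menJoin, hm, if_true]
    exact Or.inl rfl
  simp only [menJoin, hm, if_false]
  cases hq : ν.μm m with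
  | none =>
    cases hp : μ.μm m with
    | none => exact Or.inl rfl
    | some w => exact Or.inr ⟨w, rfl, (hμ.1 m w hp).1⟩
  | some w' =>
    have hw' := (hν.1 m w' hq).1
    cases hp : μ.μm m with
    | none => exact absurd ⟨w', hq, hp ▸ hw'⟩ hm
    | some w =>
      by_cases he : w = w'
      · exact Or.inl (congrArg some he)
      rcases J.mPref_total (hμ.1 m w hp).1 hw' he with h | h
      · exact Or.inr ⟨w, rfl, h⟩
      · exact absurd ⟨w', hq, hp ▸ h⟩ hm

lemma menJoin_μw_eq_or (w : W) :
    (menJoin hμ hν).μw w = μ.μw w ∨ ∃ m₁ m₂, μ.μw w = some m₁ ∧ ν.μw w = some m₂ ∧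
      (menJoin hμ hν).μw w = some m₂ ∧ J.wPref w m₁ (some m₂) := by
  by_cases hw : WLoses J μ ν w
  · obtain ⟨m₂, hm₂, -⟩ := (mGains_wLoses_surjective hμ hν).1 w hw
    obtain ⟨m₁, hm₁, hpref⟩ := hw
    have hνw := (ν.consistent _ _).1 hm₂
    simp only [menJoin, show WLoses J μ ν w from ⟨m₁, hm₁, hpref⟩, if_true]
    exact Or.inr ⟨m₁, m₂, hm₁, hνw, hνw, hνw ▸ hpref⟩
  · left
    simp only [menJoin, hw, if_false]

lemma isStable_menJoin : IsStable J (menJoin hμ hν) := by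
  constructor
  · intro m w h
    by_cases hm : MGains J μ ν m
    · exact hν.1 m w (by simpa only [menJoin, hm, if_true] using h)
    · exact hμ.1 m w (by simpa only [menJoin, hm, if_false] using h)
  · intro m w
    by_cases hw : WLoses J μ ν w
    · exact hν.not_blockingPair (mWeak_menJoin_right hμ hν m) (by simp only [menJoin, hw, if_true])
    · exact hμ.not_blockingPair (mWeak_menJoin_left hμ hν m) (by simp only [menJoin, hw, if_false])

end Join

section Truncation

variable {α : Type*} [DecidableEq α]

def truncAfter (l : List α) : Option α → List α
  | some a => l.take (l.idxOf a + 1)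
  | none => []

lemma truncAfter_prefix (l : List α) (o : Option α) : truncAfter l o <+: l := by
  cases o
  exacts [nil_prefix, take_prefix _ _]

lemma mem_truncAfter_self {l : List α} {a : α} (ha : a ∈ l) : a ∈ truncAfter l (some a) :=
  (mem_take_iff_idxOf_lt ha).2 (Nat.lt_succ_self _)

lemma idxOf_le_of_mem_truncAfter {l : List α} {a b : α} (ha : a ∈ truncAfter l (some a))
    (hb : b ∈ truncAfter l (some a)) :
    (truncAfter l (some a)).idxOf b ≤ (truncAfter l (some a)).idxOf a := by
  have hpre := truncAfter_prefix l (some a)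
  have hlen : (truncAfter l (some a)).length ≤ l.idxOf a + 1 := length_take_le _ _
  have hb' := idxOf_lt_length_of_mem hb
  rw [hpre.idxOf_eq_of_mem ha]
  omega

variable {M W : Type*} [DecidableEq M]

open Classical in
noncomputable def SMInstance.truncate (I : SMInstance M W) (L : Set W) (μ : Matching M W) :
    SMInstance M W where
  mpref := I.mpref
  wpref w := if w ∈ L then truncAfter (I.wpref w) (μ.μw w) else I.wpref w
  mnodup := I.mnodup
  wnodup w := by
    split_ifs
    exacts [(I.wnodup w).sublist (truncAfter_prefix _ _).sublist, I.wnodup w]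

variable {I : SMInstance M W} {L : Set W} {μ : Matching M W}

lemma SMInstance.truncate_wpref_of_mem {w : W} (hw : w ∈ L) :
    (I.truncate L μ).wpref w = truncAfter (I.wpref w) (μ.μw w) := by
  simp [SMInstance.truncate, hw]

lemma SMInstance.truncate_wpref_of_not_mem {w : W} (hw : w ∉ L) :
    (I.truncate L μ).wpref w = I.wpref w := by
  simp [SMInstance.truncate, hw]

lemma SMInstance.truncate_wpref_prefix (w : W) : (I.truncate L μ).wpref w <+: I.wpref w := by
  by_cases hw : w ∈ L
  · rw [truncate_wpref_of_mem hw]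
    exact truncAfter_prefix _ _
  · rw [truncate_wpref_of_not_mem hw]

lemma truncManip_truncate [DecidableEq W] : TruncManip I (I.truncate L μ) L :=
  ⟨⟨rfl, fun _ hw => SMInstance.truncate_wpref_of_not_mem hw⟩,
    fun w _ => SMInstance.truncate_wpref_prefix w⟩

lemma isStable_truncate [DecidableEq W] (hμ : IsStable I μ) : IsStable (I.truncate L μ) μ := by
  refine IsStable.of_wpref_prefix (J := I) (J' := I.truncate L μ) rfl
    SMInstance.truncate_wpref_prefix (fun m w h => ⟨(hμ.1 m w h).1, ?_⟩) hμ
  by_cases hw : w ∈ L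
  · rw [SMInstance.truncate_wpref_of_mem hw, (μ.consistent m w).1 h]
    exact mem_truncAfter_self (hμ.1 m w h).2
  · rw [SMInstance.truncate_wpref_of_not_mem hw]
    exact (hμ.1 m w h).2

lemma not_wPref_truncate {w : W} {p m : M} (hw : w ∈ L) (hp : μ.μw w = some p)
    (hm : m ∈ (I.truncate L μ).wpref w) : ¬ (I.truncate L μ).wPref w p (some m) := by
  rw [SMInstance.truncate_wpref_of_mem hw, hp] at hm
  rintro ⟨hp', hm' | hlt⟩
  · rw [SMInstance.truncate_wpref_of_mem hw, hp] at hm'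
    exact hm' hm
  · rw [SMInstance.truncate_wpref_of_mem hw, hp] at hp' hlt
    exact absurd (idxOf_le_of_mem_truncAfter hp' hm) (not_le.2 hlt)

end Truncation

/-- every matching achievable by a feasible general manipulation of
the coalition L is achievable by a truncation manipulation of L. -/
theorem general_to_truncation {M W : Type*} [DecidableEq M] [DecidableEq W]
    [Fintype M] [Fintype W] (I I' : SMInstance M W) (L : Set W) (μ : Matching M W)
    (hG : GeneralManip I I' L) (hopt : IsMenOptimal I' μ) (hstab : IsStable I μ) :
    ∃ I'' : SMInstance M W, TruncManip I I'' L ∧ IsMenOptimal I'' μ := by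
  have hμT : IsStable (I.truncate L μ) μ := isStable_truncate hstab
  refine ⟨I.truncate L μ, truncManip_truncate, hμT, fun ν hν m => ?_⟩
  have hagree : ∀ w, I'.wpref w = (I.truncate L μ).wpref w ∨
      (menJoin hμT hν).μw w = μ.μw w := by
    intro w
    by_cases hw : w ∈ L
    · refine Or.inr ((menJoin_μw_eq_or hμT hν w).resolve_right ?_)
      rintro ⟨m₁, m₂, hm₁, hm₂, -, hpref⟩
      exact not_wPref_truncate hw hm₁ (hν.1 m₂ w ((ν.consistent _ _).2 hm₂)).2 hpref
    · exact Or.inl ((hG.2 w hw).trans (SMInstance.truncate_wpref_of_not_mem hw).symm)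
  have hJoin : IsStable I' (menJoin hμT hν) :=
    IsStable.of_agree (J := I.truncate L μ) hG.1 (isStable_menJoin hμT hν) hopt.1
      (mWeak_menJoin_left hμT hν) hagree
  exact SMInstance.mWeak_trans ((SMInstance.mWeak_congr hG.1).1 (hopt.2 _ hJoin m))
    (mWeak_menJoin_right hμT hν m)
end

section
/- Let μ₁ and μ₂ be two matchings, each of which is the men-optimal stable matching for a reported profile in which manipulators in L use truncation manipulations keeping their women-optimal stable partners, and both stable under the true profile. Then μ₁ ∧ μ₂ (each woman gets her more preferred of the two partners) is also achievable: it is the men-optimal stable matching of the profile obtained by giving each manipulator the shorter of her two truncated lists. -/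
open List

/-!
By Conway's lattice theorem `ν = μ₁ ∧ μ₂` is stable under the true profile. Each woman's
`ν`-partner is at least as good as her `μ₁`- and `μ₂`-partners (and, by the rural hospitals
theorem, exists whenever those do), so `ν` is individually rational, hence stable, for the profile
`Icap` of shorter lists.

For men-optimality take any `Icap`-stable `μ'` and its join `τ = μ' ∨ ν`, which is
`Icap`-stable. A truly blocking pair `(m, w)` of `τ` would need `w` single in `τ` (otherwise her
partner is on her short list and beats `m`), hence single in the women-optimal matching `μW`;
then `m`'s `μW`-partner `w₀` would prefer `τ(w₀)`, and so `ν(w₀)`, to `μW(w₀)`, which is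
impossible. Thus `τ` is truly stable, hence stable for both truncated profiles, and
men-optimality of `μ₁`, `μ₂` gives `ν(m) ≥ τ(m) ≥ μ'(m)` for every man `m`.
-/

section OptRank

variable {α : Type*} [DecidableEq α]

/-- `idxOf` returns `l.length` on non-members, so `none` and every non-member share the last
rank; the rank is injective only on options whose value lies in `l`. -/
def optRank (l : List α) : Option α → ℕ
  | some a => l.idxOf a
  | none => l.length

@[simp] theorem optRank_some (l : List α) (a : α) : optRank l (some a) = l.idxOf a := rfl

@[simp] theorem optRank_none (l : List α) : optRank l none = l.length := rfl

theorem optRank_le_length (l : List α) (o : Option α) : optRank l o ≤ l.length := by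
  cases o <;> simp [idxOf_le_length]

theorem exists_mem_of_optRank_lt_length {l : List α} {o : Option α}
    (h : optRank l o < l.length) : ∃ a ∈ l, o = some a := by
  cases o with
  | none => exact absurd h (lt_irrefl _)
  | some a => exact ⟨a, idxOf_lt_length_iff.1 h, rfl⟩

theorem eq_of_optRank_eq {l : List α} {o₁ o₂ : Option α} (h₁ : ∀ a ∈ o₁, a ∈ l)
    (h₂ : ∀ a ∈ o₂, a ∈ l) (h : optRank l o₁ = optRank l o₂) : o₁ = o₂ := by
  rcases o₁ with _ | a <;> rcases o₂ with _ | b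
  · rfl
  · have := idxOf_lt_length_iff.2 (h₂ b rfl); simp_all
  · have := idxOf_lt_length_iff.2 (h₁ a rfl); simp_all
  · rw [(idxOf_inj (h₁ a rfl)).1 h]

theorem List.IsPrefix.idxOf_eq_min {l₁ l₂ : List α} (h : l₁ <+: l₂) (a : α) :
    l₁.idxOf a = min (l₂.idxOf a) l₁.length := by
  obtain ⟨t, rfl⟩ := h
  by_cases ha : a ∈ l₁
  · rw [idxOf_append_of_mem ha, min_eq_left (idxOf_lt_length_iff.2 ha).le]
  · rw [idxOf_append_of_notMem ha, idxOf_of_notMem ha]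
    omega

theorem List.IsPrefix.optRank_eq_min {l₁ l₂ : List α} (h : l₁ <+: l₂) (o : Option α) :
    optRank l₁ o = min (optRank l₂ o) l₁.length := by
  cases o with
  | none => simp [h.length_le]
  | some a => exact h.idxOf_eq_min a

def pickBetter (l : List α) (o₁ o₂ : Option α) : Option α :=
  if optRank l o₁ ≤ optRank l o₂ then o₁ else o₂

def pickWorse (l : List α) (o₁ o₂ : Option α) : Option α :=
  if optRank l o₁ ≤ optRank l o₂ then o₂ else o₁

variable {l : List α} {o₁ o₂ : Option α}

theorem optRank_pickBetter :
    optRank l (pickBetter l o₁ o₂) = min (optRank l o₁) (optRank l o₂) := by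
  unfold pickBetter; split_ifs <;> omega

theorem optRank_pickWorse :
    optRank l (pickWorse l o₁ o₂) = max (optRank l o₁) (optRank l o₂) := by
  unfold pickWorse; split_ifs <;> omega

theorem pickBetter_eq_or : pickBetter l o₁ o₂ = o₁ ∨ pickBetter l o₁ o₂ = o₂ := by
  unfold pickBetter; split_ifs <;> simp

theorem pickWorse_eq_or : pickWorse l o₁ o₂ = o₁ ∨ pickWorse l o₁ o₂ = o₂ := by
  unfold pickWorse; split_ifs <;> simp

theorem pickBetter_of_le (h : optRank l o₁ ≤ optRank l o₂) : pickBetter l o₁ o₂ = o₁ :=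
  if_pos h

theorem pickWorse_of_le (h : optRank l o₁ ≤ optRank l o₂) : pickWorse l o₁ o₂ = o₂ :=
  if_pos h

theorem pickBetter_of_ge (h₁ : ∀ a ∈ o₁, a ∈ l) (h₂ : ∀ a ∈ o₂, a ∈ l)
    (h : optRank l o₂ ≤ optRank l o₁) : pickBetter l o₁ o₂ = o₂ := by
  unfold pickBetter
  split_ifs with h'
  · exact eq_of_optRank_eq h₁ h₂ (le_antisymm h' h)
  · rfl

theorem pickWorse_of_ge (h₁ : ∀ a ∈ o₁, a ∈ l) (h₂ : ∀ a ∈ o₂, a ∈ l)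
    (h : optRank l o₂ ≤ optRank l o₁) : pickWorse l o₁ o₂ = o₁ := by
  unfold pickWorse
  split_ifs with h'
  · exact (eq_of_optRank_eq h₁ h₂ (le_antisymm h' h)).symm
  · rfl

end OptRank

section Instances

variable {M W : Type*} {J J' : SMInstance M W}

def SMInstance.flip (J : SMInstance M W) : SMInstance W M :=
  ⟨J.wpref, J.mpref, J.wnodup, J.mnodup⟩

def Matching.flip (μ : Matching M W) : Matching W M :=
  ⟨μ.μw, μ.μm, fun w m => (μ.consistent m w).symm⟩

theorem Matching.injOn_μm (μ : Matching M W) : Set.InjOn μ.μm {m | μ.μm m ≠ none} := by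
  intro m₁ h₁ m₂ _ he
  obtain ⟨w, hw⟩ := Option.ne_none_iff_exists'.1 h₁
  have h₂ := (μ.consistent m₂ w).1 (he ▸ hw)
  rw [(μ.consistent m₁ w).1 hw] at h₂
  exact Option.some_inj.1 h₂

theorem IndivRational.mem_mpref {μ : Matching M W} (h : IndivRational J μ) (m : M) :
    ∀ w ∈ μ.μm m, w ∈ J.mpref m :=
  fun w hw => (h m w hw).1

theorem IndivRational.mem_wpref {μ : Matching M W} (h : IndivRational J μ) (w : W) :
    ∀ m ∈ μ.μw w, m ∈ J.wpref w :=
  fun m hm => (h m w ((μ.consistent m w).2 hm)).2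

def IsTruncation (J' J : SMInstance M W) : Prop :=
  J'.mpref = J.mpref ∧ ∀ w, J'.wpref w <+: J.wpref w

theorem IsTruncation.trans {J₁ J₂ J₃ : SMInstance M W} (h₁₂ : IsTruncation J₁ J₂)
    (h₂₃ : IsTruncation J₂ J₃) : IsTruncation J₁ J₃ :=
  ⟨h₁₂.1.trans h₂₃.1, fun w => (h₁₂.2 w).trans (h₂₃.2 w)⟩

theorem TruncManip.isTruncation {L : Set W} (h : TruncManip J J' L) : IsTruncation J' J := by
  refine ⟨h.1.1, fun w => ?_⟩
  by_cases hw : w ∈ L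
  · exact h.2 w hw
  · rw [h.1.2 w hw]

theorem IndivRational.of_isTruncation {μ : Matching M W} (hJ : IsTruncation J' J)
    (h : IndivRational J' μ) : IndivRational J μ :=
  fun m w hμ => ⟨hJ.1 ▸ (h m w hμ).1, (hJ.2 w).subset (h m w hμ).2⟩

theorem IndivRational.of_truncManip {L : Set W} {μ : Matching M W} (h : TruncManip J J' L)
    (hμ : IndivRational J μ) (hL : ∀ w ∈ L, ∀ m, μ.μw w = some m → m ∈ J'.wpref w) :
    IndivRational J' μ := by
  intro m w hmw
  refine ⟨h.1.1 ▸ (hμ m w hmw).1, ?_⟩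
  by_cases hw : w ∈ L
  · exact hL w hw m ((μ.consistent m w).1 hmw)
  · exact h.1.2 w hw ▸ (hμ m w hmw).2

end Instances

section Preferences

variable {M W : Type*} {J : SMInstance M W}

section

variable [DecidableEq W]

theorem SMInstance.mPref_iff {m : M} {w : W} {o : Option W} :
    J.mPref m w o ↔ (J.mpref m).idxOf w < optRank (J.mpref m) o := by
  cases o with
  | none => exact idxOf_lt_length_iff.symm
  | some w' =>
    by_cases hw' : w' ∈ J.mpref m
    · have := idxOf_lt_length_iff.2 hw'
      simp only [SMInstance.mPref, optRank_some, hw', not_true_eq_false, false_or,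
        and_iff_right_iff_imp]
      exact fun h => idxOf_lt_length_iff.1 (h.trans this)
    · simp [SMInstance.mPref, hw', idxOf_lt_length_iff]

theorem SMInstance.optRank_le_of_mWeak {m : M} {o₁ o₂ : Option W} (h : J.mWeak m o₁ o₂) :
    optRank (J.mpref m) o₁ ≤ optRank (J.mpref m) o₂ := by
  rcases h with rfl | ⟨w, rfl, h⟩
  · rfl
  · exact (J.mPref_iff.1 h).le

theorem SMInstance.mWeak_of_optRank_le {m : M} {o₁ o₂ : Option W}
    (h₁ : ∀ w ∈ o₁, w ∈ J.mpref m) (h₂ : ∀ w ∈ o₂, w ∈ J.mpref m)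
    (h : optRank (J.mpref m) o₁ ≤ optRank (J.mpref m) o₂) : J.mWeak m o₁ o₂ := by
  rcases h.eq_or_lt with h | h
  · exact Or.inl (eq_of_optRank_eq h₁ h₂ h)
  · obtain ⟨w, -, rfl⟩ := exists_mem_of_optRank_lt_length (h.trans_le (optRank_le_length _ _))
    exact Or.inr ⟨w, rfl, J.mPref_iff.2 h⟩

end

section

variable [DecidableEq M]

theorem SMInstance.wPref_iff {w : W} {m : M} {o : Option M} :
    J.wPref w m o ↔ (J.wpref w).idxOf m < optRank (J.wpref w) o :=
  J.flip.mPref_iff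

theorem SMInstance.optRank_le_of_wWeak {w : W} {o₁ o₂ : Option M} (h : J.wWeak w o₁ o₂) :
    optRank (J.wpref w) o₁ ≤ optRank (J.wpref w) o₂ :=
  J.flip.optRank_le_of_mWeak h

theorem SMInstance.wWeak_of_optRank_le {w : W} {o₁ o₂ : Option M}
    (h₁ : ∀ m ∈ o₁, m ∈ J.wpref w) (h₂ : ∀ m ∈ o₂, m ∈ J.wpref w)
    (h : optRank (J.wpref w) o₁ ≤ optRank (J.wpref w) o₂) : J.wWeak w o₁ o₂ :=
  J.flip.mWeak_of_optRank_le h₁ h₂ h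

end

variable [DecidableEq M] [DecidableEq W] {μ : Matching M W}

theorem blockingPair_iff {m : M} {w : W} :
    BlockingPair J μ m w ↔ (J.mpref m).idxOf w < optRank (J.mpref m) (μ.μm m) ∧
      (J.wpref w).idxOf m < optRank (J.wpref w) (μ.μw w) := by
  rw [BlockingPair, J.mPref_iff, J.wPref_iff]
  refine ⟨fun h => h.2, fun h => ⟨fun he => ?_, h⟩⟩
  rw [he] at h
  exact lt_irrefl _ h.1

theorem isStable_iff :
    IsStable J μ ↔ IndivRational J μ ∧ ∀ m w,
      (J.mpref m).idxOf w < optRank (J.mpref m) (μ.μm m) →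
        optRank (J.wpref w) (μ.μw w) ≤ (J.wpref w).idxOf m := by
  simp only [IsStable, blockingPair_iff, not_and, not_lt]

theorem IsStable.optRank_le (h : IsStable J μ) {m : M} {w : W}
    (hm : (J.mpref m).idxOf w < optRank (J.mpref m) (μ.μm m)) :
    optRank (J.wpref w) (μ.μw w) ≤ (J.wpref w).idxOf m :=
  (isStable_iff.1 h).2 m w hm

theorem IsStable.flip (h : IsStable J μ) : IsStable J.flip μ.flip := by
  rw [isStable_iff] at h ⊢
  refine ⟨fun w m hm => (h.1 m w ((μ.consistent m w).2 hm)).symm, fun w m hw => ?_⟩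
  by_contra! hlt
  exact absurd (h.2 m w hlt) (not_le.2 hw)

end Preferences

section Lattice

variable {M W : Type*} [DecidableEq M] [DecidableEq W] {J : SMInstance M W}
  {μa μb : Matching M W}

theorem IsStable.wRank_lt_of_mRank_lt (ha : IsStable J μa) (hb : IsStable J μb) {m : M}
    {w : W} (hw : μa.μm m = some w)
    (h : optRank (J.mpref m) (μa.μm m) < optRank (J.mpref m) (μb.μm m)) :
    optRank (J.wpref w) (μb.μw w) < optRank (J.wpref w) (μa.μw w) := by
  have hwa : μa.μw w = some m := (μa.consistent m w).1 hw
  have hle : optRank (J.wpref w) (μb.μw w) ≤ optRank (J.wpref w) (μa.μw w) := by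
    rw [hwa]; rw [hw] at h; exact hb.optRank_le h
  refine hle.lt_of_ne fun he => ?_
  have hwb := eq_of_optRank_eq (hb.1.mem_wpref w) (ha.1.mem_wpref w) he
  rw [hwa, ← μb.consistent, ← hw] at hwb
  exact lt_irrefl _ (hwb ▸ h)

variable [Fintype M] [Fintype W]

/-- Gale–Sotomayor counting: `μa` maps the men preferring `μa` injectively to the women
preferring `μb`, and `μb` maps those women injectively back, so both maps are bijections. -/
theorem IsStable.exists_μm_eq_of_mRank_lt (ha : IsStable J μa) (hb : IsStable J μb) {m : M}
    (hm : optRank (J.mpref m) (μa.μm m) < optRank (J.mpref m) (μb.μm m)) :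
    ∃ w, μb.μm m = some w ∧
      optRank (J.wpref w) (μb.μw w) < optRank (J.wpref w) (μa.μw w) := by
  classical
  set A : Finset M := {m | optRank (J.mpref m) (μa.μm m) < optRank (J.mpref m) (μb.μm m)}
  set B : Finset W := {w | optRank (J.wpref w) (μb.μw w) < optRank (J.wpref w) (μa.μw w)}
  have hA : ∀ m ∈ A, optRank (J.mpref m) (μa.μm m) < optRank (J.mpref m) (μb.μm m) :=
    fun m hm => (Finset.mem_filter.1 hm).2
  have hB : ∀ w ∈ B, optRank (J.wpref w) (μb.μw w) < optRank (J.wpref w) (μa.μw w) :=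
    fun w hw => (Finset.mem_filter.1 hw).2
  have hAB : Set.MapsTo μa.μm A (B.map .some) := by
    intro m hm
    obtain ⟨w, -, hw⟩ :=
      exists_mem_of_optRank_lt_length ((hA m hm).trans_le (optRank_le_length _ _))
    rw [hw]
    exact Finset.mem_map_of_mem _
      (Finset.mem_filter.2 ⟨Finset.mem_univ _, ha.wRank_lt_of_mRank_lt hb hw (hA m hm)⟩)
  have hBA : Set.MapsTo μb.μw B (A.map .some) := by
    intro w hw
    obtain ⟨m, -, hm⟩ :=
      exists_mem_of_optRank_lt_length ((hB w hw).trans_le (optRank_le_length _ _))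
    rw [hm]
    exact Finset.mem_map_of_mem _ (Finset.mem_filter.2
      ⟨Finset.mem_univ _, hb.flip.wRank_lt_of_mRank_lt ha.flip hm (hB w hw)⟩)
  have hinjA : Set.InjOn μa.μm A := μa.injOn_μm.mono <| by
    intro m hm hnone
    have := hA m hm
    rw [hnone] at this
    exact absurd (optRank_le_length _ _) this.not_ge
  have hinjB : Set.InjOn μb.μw B := μb.flip.injOn_μm.mono <| by
    intro w hw hnone
    have := hB w hw
    rw [show μb.μw w = none from hnone] at this
    exact absurd (optRank_le_length _ _) this.not_ge
  have hcard : (A.map .some).card ≤ B.card :=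
    calc (A.map .some).card = A.card := Finset.card_map _
      _ ≤ (B.map .some).card := Finset.card_le_card_of_injOn _ hAB hinjA
      _ = B.card := Finset.card_map _
  obtain ⟨w, hwB, hw⟩ := Finset.surjOn_of_injOn_of_card_le μb.μw hBA hinjB hcard
    (Finset.mem_map_of_mem _ (Finset.mem_filter.2 ⟨Finset.mem_univ m, hm⟩))
  exact ⟨w, (μb.consistent m w).2 hw, hB w hwB⟩

theorem IsStable.exists_μw_eq_some (ha : IsStable J μa) (hb : IsStable J μb) {w : W} {m : M}
    (h : μa.μw w = some m) : ∃ m', μb.μw w = some m' := by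
  by_contra! hnone
  have hlt : optRank (J.wpref w) (μa.μw w) < optRank (J.wpref w) (μb.μw w) := by
    rw [h, Option.eq_none_iff_forall_ne_some.2 hnone]
    exact idxOf_lt_length_iff.2 (ha.1.mem_wpref w m h)
  obtain ⟨m', hm', -⟩ := ha.flip.exists_μm_eq_of_mRank_lt hb.flip hlt
  exact hnone m' hm'

theorem IsStable.wRank_le_of_mRank_le (ha : IsStable J μa) (hb : IsStable J μb) {m : M}
    {w : W} (hw : μa.μm m = some w ∨ μb.μm m = some w)
    (h : optRank (J.mpref m) (μa.μm m) ≤ optRank (J.mpref m) (μb.μm m)) :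
    optRank (J.wpref w) (μb.μw w) ≤ optRank (J.wpref w) (μa.μw w) := by
  rcases h.eq_or_lt with h | h
  · have hab := eq_of_optRank_eq (ha.1.mem_mpref m) (hb.1.mem_mpref m) h
    have hwb : μb.μm m = some w := hw.elim (hab ▸ ·) id
    rw [(μb.consistent m w).1 hwb, (μa.consistent m w).1 (hab ▸ hwb)]
  · rcases hw with hw | hw
    · exact (ha.wRank_lt_of_mRank_lt hb hw h).le
    · obtain ⟨w', hw', hlt⟩ := ha.exists_μm_eq_of_mRank_lt hb h
      obtain rfl : w = w' := Option.some_inj.1 (hw.symm.trans hw')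
      exact hlt.le

theorem IsStable.meet_consistent (ha : IsStable J μa) (hb : IsStable J μb) (m : M) (w : W) :
    pickWorse (J.mpref m) (μa.μm m) (μb.μm m) = some w ↔
      pickBetter (J.wpref w) (μa.μw w) (μb.μw w) = some m := by
  have hma := ha.1.mem_mpref m
  have hmb := hb.1.mem_mpref m
  have hwa := ha.1.mem_wpref w
  have hwb := hb.1.mem_wpref w
  constructor
  · intro h
    rcases le_total (optRank (J.mpref m) (μa.μm m)) (optRank (J.mpref m) (μb.μm m))
      with hle | hle
    · rw [pickWorse_of_le hle] at h
      rw [pickBetter_of_ge hwa hwb (ha.wRank_le_of_mRank_le hb (Or.inr h) hle)]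
      exact (μb.consistent m w).1 h
    · rw [pickWorse_of_ge hma hmb hle] at h
      rw [pickBetter_of_le (hb.wRank_le_of_mRank_le ha (Or.inr h) hle)]
      exact (μa.consistent m w).1 h
  · intro h
    rcases le_total (optRank (J.wpref w) (μa.μw w)) (optRank (J.wpref w) (μb.μw w))
      with hle | hle
    · rw [pickBetter_of_le hle] at h
      have hle' : optRank (J.mpref m) (μb.μm m) ≤ optRank (J.mpref m) (μa.μm m) :=
        ha.flip.wRank_le_of_mRank_le hb.flip (Or.inl h) hle
      rw [pickWorse_of_ge hma hmb hle']
      exact (μa.consistent m w).2 h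
    · rw [pickBetter_of_ge hwa hwb hle] at h
      have hle' : optRank (J.mpref m) (μa.μm m) ≤ optRank (J.mpref m) (μb.μm m) :=
        hb.flip.wRank_le_of_mRank_le ha.flip (Or.inl h) hle
      rw [pickWorse_of_le hle']
      exact (μb.consistent m w).2 h

def Matching.meet (J : SMInstance M W) (μa μb : Matching M W) (ha : IsStable J μa)
    (hb : IsStable J μb) : Matching M W where
  μm m := pickWorse (J.mpref m) (μa.μm m) (μb.μm m)
  μw w := pickBetter (J.wpref w) (μa.μw w) (μb.μw w)
  consistent := ha.meet_consistent hb

def Matching.join (J : SMInstance M W) (μa μb : Matching M W) (ha : IsStable J μa)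
    (hb : IsStable J μb) : Matching M W :=
  (Matching.meet J.flip μa.flip μb.flip ha.flip hb.flip).flip

@[simp] theorem Matching.meet_μm (ha : IsStable J μa) (hb : IsStable J μb) (m : M) :
    (Matching.meet J μa μb ha hb).μm m = pickWorse (J.mpref m) (μa.μm m) (μb.μm m) := rfl

@[simp] theorem Matching.meet_μw (ha : IsStable J μa) (hb : IsStable J μb) (w : W) :
    (Matching.meet J μa μb ha hb).μw w = pickBetter (J.wpref w) (μa.μw w) (μb.μw w) := rfl

@[simp] theorem Matching.join_μm (ha : IsStable J μa) (hb : IsStable J μb) (m : M) :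
    (Matching.join J μa μb ha hb).μm m = pickBetter (J.mpref m) (μa.μm m) (μb.μm m) := rfl

@[simp] theorem Matching.join_μw (ha : IsStable J μa) (hb : IsStable J μb) (w : W) :
    (Matching.join J μa μb ha hb).μw w = pickWorse (J.wpref w) (μa.μw w) (μb.μw w) := rfl

theorem IsStable.meet (ha : IsStable J μa) (hb : IsStable J μb) :
    IsStable J (Matching.meet J μa μb ha hb) := by
  refine isStable_iff.2 ⟨fun m w h => ?_, fun m w h => ?_⟩
  · rcases pickWorse_eq_or (l := J.mpref m) (o₁ := μa.μm m) (o₂ := μb.μm m) with he | he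
    · exact ha.1 m w (he ▸ h)
    · exact hb.1 m w (he ▸ h)
  · rw [Matching.meet_μm, optRank_pickWorse, lt_max_iff] at h
    rw [Matching.meet_μw, optRank_pickBetter]
    exact h.elim (fun h => min_le_of_left_le (ha.optRank_le h))
      (fun h => min_le_of_right_le (hb.optRank_le h))

theorem IsStable.join (ha : IsStable J μa) (hb : IsStable J μb) :
    IsStable J (Matching.join J μa μb ha hb) :=
  (ha.flip.meet hb.flip).flip

theorem IsStable.wWeak_meet (ha : IsStable J μa) (hb : IsStable J μb) (w : W) :
    J.wWeak w ((Matching.meet J μa μb ha hb).μw w) (μa.μw w) ∧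
      J.wWeak w ((Matching.meet J μa μb ha hb).μw w) (μb.μw w) := by
  have hν := (ha.meet hb).1.mem_wpref w
  refine ⟨J.wWeak_of_optRank_le hν (ha.1.mem_wpref w) ?_,
    J.wWeak_of_optRank_le hν (hb.1.mem_wpref w) ?_⟩ <;>
  simp only [Matching.meet_μw, optRank_pickBetter, min_le_left, min_le_right]

end Lattice

section Truncation

variable {M W : Type*} [DecidableEq M] [DecidableEq W] {J J' : SMInstance M W}

theorem IsStable.of_isTruncation {μ : Matching M W} (hJ : IsTruncation J' J)
    (hμ : IsStable J μ) (hir : IndivRational J' μ) : IsStable J' μ := by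
  refine isStable_iff.2 ⟨hir, fun m w hm => ?_⟩
  rw [hJ.1] at hm
  rw [(hJ.2 w).optRank_eq_min, (hJ.2 w).idxOf_eq_min]
  exact min_le_min_right _ (hμ.optRank_le hm)

theorem IsStable.μw_eq_none_of_blockingPair {σ : Matching M W} (hJ : IsTruncation J' J)
    (hσ : IsStable J' σ) {m : M} {w : W} (hb : BlockingPair J σ m w) : σ.μw w = none := by
  obtain ⟨hm, hw⟩ := blockingPair_iff.1 hb
  rw [← hJ.1] at hm
  have h := hσ.optRank_le hm
  rw [(hJ.2 w).optRank_eq_min, (hJ.2 w).idxOf_eq_min] at h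
  cases hσw : σ.μw w with
  | none => rfl
  | some p =>
    have hp := idxOf_lt_length_iff.2 (hσ.1.mem_wpref w p hσw)
    rw [(hJ.2 w).idxOf_eq_min] at hp
    rw [hσw, optRank_some] at h hw
    omega

variable [Fintype M] [Fintype W]

theorem IsStable.indivRational_of_dominates {ρ σ : Matching M W} (hJ : IsTruncation J' J)
    (hρ : IsStable J ρ) (hρ' : IndivRational J' ρ) (hσ : IsStable J σ)
    (hdom : ∀ w, optRank (J.wpref w) (σ.μw w) ≤ optRank (J.wpref w) (ρ.μw w)) :
    IndivRational J' σ := by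
  intro m w hm
  refine ⟨hJ.1 ▸ (hσ.1 m w hm).1, ?_⟩
  have hσw := (σ.consistent m w).1 hm
  obtain ⟨p, hp⟩ := hσ.exists_μw_eq_some hρ hσw
  have hpJ' := idxOf_lt_length_iff.2 (hρ'.mem_wpref w p hp)
  have hle := hdom w
  rw [hσw, hp, optRank_some, optRank_some] at hle
  rw [← idxOf_lt_length_iff, (hJ.2 w).idxOf_eq_min]
  rw [(hJ.2 w).idxOf_eq_min] at hpJ'
  omega

theorem IsStable.of_isTruncation_of_dominated {μW ρ σ : Matching M W} (hσ : IsStable J' σ)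
    (hJ : IsTruncation J' J) (hW : IsWomenOptimal J μW) (hWJ' : IndivRational J' μW)
    (hρ : IsStable J ρ)
    (hdom : ∀ w, optRank (J'.wpref w) (ρ.μw w) ≤ optRank (J'.wpref w) (σ.μw w)) :
    IsStable J σ := by
  refine ⟨hσ.1.of_isTruncation hJ, fun m w hb => ?_⟩
  have hσw : σ.μw w = none := hσ.μw_eq_none_of_blockingPair hJ hb
  have hWw : μW.μw w = none := by
    by_contra! h
    obtain ⟨p, hp⟩ := Option.ne_none_iff_exists'.1 h
    obtain ⟨_, h'⟩ := (hW.1.of_isTruncation hJ hWJ').exists_μw_eq_some hσ hp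
    rw [hσw] at h'
    cases h'
  rw [blockingPair_iff, hσw, optRank_none] at hb
  obtain ⟨hm, hw⟩ := hb
  have hW₀ : optRank (J.mpref m) (μW.μm m) ≤ (J.mpref m).idxOf w := by
    by_contra! hlt
    have := hW.1.optRank_le hlt
    rw [hWw, optRank_none] at this
    omega
  obtain ⟨w₀, -, hw₀⟩ :=
    exists_mem_of_optRank_lt_length ((hW₀.trans_lt hm).trans_le (optRank_le_length _ _))
  rw [hw₀, optRank_some] at hW₀
  have hmw₀ : μW.μw w₀ = some m := (μW.consistent m w₀).1 hw₀
  -- `(m, w₀)` does not block `σ` in `J'`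
  have hσw₀ : optRank (J'.wpref w₀) (σ.μw w₀) < (J'.wpref w₀).idxOf m := by
    refine (hσ.optRank_le (by rw [hJ.1]; exact hW₀.trans_lt hm)).lt_of_ne fun he => ?_
    have hσm :=
      eq_of_optRank_eq (o₂ := some m) (hσ.1.mem_wpref w₀) (hmw₀ ▸ hWJ'.mem_wpref w₀) he
    rw [(σ.consistent m w₀).2 hσm, optRank_some] at hm
    omega
  have hWρ := J.optRank_le_of_wWeak (hW.2 ρ hρ w₀)
  have hρσ := hdom w₀
  rw [hmw₀, optRank_some] at hWρ
  rw [(hJ.2 w₀).optRank_eq_min, (hJ.2 w₀).idxOf_eq_min] at hσw₀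
  rw [(hJ.2 w₀).optRank_eq_min, (hJ.2 w₀).optRank_eq_min] at hρσ
  omega

end Truncation

section ShorterLists

variable {M W : Type*} {I I₁ I₂ Icap : SMInstance M W}

theorem wpref_eq_shorter {L : Set W} (h1 : TruncManip I I₁ L) (h2 : TruncManip I I₂ L)
    (hcapN : ∀ w ∉ L, Icap.wpref w = I.wpref w)
    (hcapL : ∀ w ∈ L, Icap.wpref w =
      if (I₁.wpref w).length ≤ (I₂.wpref w).length then I₁.wpref w else I₂.wpref w)
    (w : W) :
    Icap.wpref w =
      if (I₁.wpref w).length ≤ (I₂.wpref w).length then I₁.wpref w else I₂.wpref w := by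
  by_cases hw : w ∈ L
  · exact hcapL w hw
  · rw [hcapN w hw, h1.1.2 w hw, h2.1.2 w hw, ite_self]

theorem isTruncation_of_shorter (h₁ : IsTruncation I₁ I) (h₂ : IsTruncation I₂ I)
    (hM : Icap.mpref = I.mpref)
    (hshort : ∀ w, Icap.wpref w =
      if (I₁.wpref w).length ≤ (I₂.wpref w).length then I₁.wpref w else I₂.wpref w) :
    IsTruncation Icap I₁ ∧ IsTruncation Icap I₂ := by
  refine ⟨⟨hM.trans h₁.1.symm, fun w => ?_⟩, ⟨hM.trans h₂.1.symm, fun w => ?_⟩⟩ <;>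
    rw [hshort w] <;> split_ifs with hlen
  · exact prefix_refl _
  · exact prefix_of_prefix_length_le (h₂.2 w) (h₁.2 w) (by omega)
  · exact prefix_of_prefix_length_le (h₁.2 w) (h₂.2 w) hlen
  · exact prefix_refl _

theorem indivRational_of_shorter {μ : Matching M W} (hM : Icap.mpref = I₁.mpref)
    (hshort : ∀ w, Icap.wpref w =
      if (I₁.wpref w).length ≤ (I₂.wpref w).length then I₁.wpref w else I₂.wpref w)
    (hμ₁ : IndivRational I₁ μ) (hμ₂ : IndivRational I₂ μ) : IndivRational Icap μ := by
  intro m w hmw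
  refine ⟨hM ▸ (hμ₁ m w hmw).1, ?_⟩
  rw [hshort w]
  split_ifs
  · exact (hμ₁ m w hmw).2
  · exact (hμ₂ m w hmw).2

variable [DecidableEq M] [DecidableEq W] [Fintype M] [Fintype W]

theorem isMenOptimal_meet_of_isTruncation {μW μ₁ μ₂ : Matching M W}
    (h₁ : IsTruncation I₁ I) (h₂ : IsTruncation I₂ I) (hcap₁ : IsTruncation Icap I₁)
    (hcap₂ : IsTruncation Icap I₂) (hW : IsWomenOptimal I μW) (hWcap : IndivRational Icap μW)
    (ho₁ : IsMenOptimal I₁ μ₁) (ho₂ : IsMenOptimal I₂ μ₂) (hs₁ : IsStable I μ₁)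
    (hs₂ : IsStable I μ₂) (hν : IsStable Icap (Matching.meet I μ₁ μ₂ hs₁ hs₂)) :
    IsMenOptimal Icap (Matching.meet I μ₁ μ₂ hs₁ hs₂) := by
  refine ⟨hν, fun μ' hμ' m => ?_⟩
  set ν := Matching.meet I μ₁ μ₂ hs₁ hs₂
  set τ := Matching.join Icap μ' ν hμ' hν
  have hτ : IsStable Icap τ := hμ'.join hν
  have hτI : IsStable I τ :=
    hτ.of_isTruncation_of_dominated (hcap₁.trans h₁) hW hWcap (hs₁.meet hs₂) fun w => by
      simp only [τ, Matching.join_μw, optRank_pickWorse]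
      exact le_max_right _ _
  have hle₁ := I₁.optRank_le_of_mWeak
    (ho₁.2 τ (hτI.of_isTruncation h₁ (hτ.1.of_isTruncation hcap₁)) m)
  have hle₂ := I₂.optRank_le_of_mWeak
    (ho₂.2 τ (hτI.of_isTruncation h₂ (hτ.1.of_isTruncation hcap₂)) m)
  refine Icap.mWeak_of_optRank_le (hν.1.mem_mpref m) (hμ'.1.mem_mpref m) ?_
  rw [h₁.1] at hle₁
  rw [h₂.1] at hle₂
  simp only [τ, ν, Matching.join_μm, Matching.meet_μm, hcap₁.1.trans h₁.1,
    optRank_pickBetter, optRank_pickWorse] at hle₁ hle₂ ⊢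
  omega

end ShorterLists

/-- the women-meet of two matchings achievable by truncation
manipulations (keeping women-optimal partners, both stable under truth) is the
men-optimal stable matching of the profile of pointwise-shorter truncations. -/
theorem meet_achievable {M W : Type*} [DecidableEq M] [DecidableEq W]
    [Fintype M] [Fintype W] (I I₁ I₂ Icap : SMInstance M W) (L : Set W)
    (μW μ₁ μ₂ : Matching M W) (hW : IsWomenOptimal I μW)
    (h1 : TruncManip I I₁ L) (h2 : TruncManip I I₂ L)
    (hk1 : ∀ w ∈ L, ∀ m, μW.μw w = some m → m ∈ I₁.wpref w)
    (hk2 : ∀ w ∈ L, ∀ m, μW.μw w = some m → m ∈ I₂.wpref w)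
    (ho1 : IsMenOptimal I₁ μ₁) (ho2 : IsMenOptimal I₂ μ₂)
    (hs1 : IsStable I μ₁) (hs2 : IsStable I μ₂)
    (hcapM : Icap.mpref = I.mpref)
    (hcapN : ∀ w ∉ L, Icap.wpref w = I.wpref w)
    (hcapL : ∀ w ∈ L, Icap.wpref w =
      if (I₁.wpref w).length ≤ (I₂.wpref w).length then I₁.wpref w else I₂.wpref w) :
    ∃ ν : Matching M W, IsMenOptimal Icap ν ∧
      ∀ w, (ν.μw w = μ₁.μw w ∨ ν.μw w = μ₂.μw w) ∧
        I.wWeak w (ν.μw w) (μ₁.μw w) ∧ I.wWeak w (ν.μw w) (μ₂.μw w) := by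
  have hI₁ := h1.isTruncation
  have hI₂ := h2.isTruncation
  have hshort := wpref_eq_shorter h1 h2 hcapN hcapL
  obtain ⟨hcap₁, hcap₂⟩ := isTruncation_of_shorter hI₁ hI₂ hcapM hshort
  have hcapIR := fun μ => indivRational_of_shorter (μ := μ) (hcapM.trans hI₁.1.symm) hshort
  have hν := hs1.meet hs2
  have hνcap : IsStable Icap (Matching.meet I μ₁ μ₂ hs1 hs2) := by
    refine hν.of_isTruncation (hcap₁.trans hI₁) (hcapIR _ ?_ ?_)
    · exact hs1.indivRational_of_dominates hI₁ ho1.1.1 hν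
        fun w => I.optRank_le_of_wWeak (hs1.wWeak_meet hs2 w).1
    · exact hs2.indivRational_of_dominates hI₂ ho2.1.1 hν
        fun w => I.optRank_le_of_wWeak (hs1.wWeak_meet hs2 w).2
  have hWcap := hcapIR μW (hW.1.1.of_truncManip h1 hk1) (hW.1.1.of_truncManip h2 hk2)
  exact ⟨_,
    isMenOptimal_meet_of_isTruncation hI₁ hI₂ hcap₁ hcap₂ hW hWcap ho1 ho2 hs1 hs2 hνcap,
    fun w => ⟨pickBetter_eq_or, hs1.wWeak_meet hs2 w⟩⟩
end
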